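/- arXiv:1003.5856 — 4 statements merged into one kernel-verified Lean document; each statement's English description precedes it below -/
import Mathlib

section
/- Let q be an odd prime power and n = 2^m with m ≥ 1. The number of self-reciprocal monic irreducible polynomials of degree 2n over F_q equals (q^n - 1)/(2n). -/
/-!
Let `q = #F`, `n = 2 ^ m`, and let `Ω` be an algebraic closure of `F`. If `β ∈ Ω` satisfies
`β ^ (q ^ n + 1) = 1` and `β ≠ ±1`, then `β ^ q ^ n = β⁻¹ ≠ β`, so the degree `d` of `β` over `F`
divides `2n` but not `n`; as `n` is a power of two, `d = 2n`. As `β⁻¹` is a conjugate of `β`, the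
minimal polynomial `f` of `β` divides its reverse, so `f.reverse = ±f`; the sign `-1` would force
`f(1) = 0` in odd characteristic. Conversely, a root `β` of a self-reciprocal irreducible `f` of
degree `2n` has `β⁻¹ = β ^ q ^ i` for some `i < 2n`; iterating gives `2n ∣ 2i`, so `i = n`.
Hence the `q ^ n - 1` such `β` are partitioned into the root sets, of size `2n` each, of the
polynomials being counted.
-/

open Polynomial IntermediateField

namespace Polynomial

theorem eval_one_reverse {R : Type*} [CommSemiring R] (f : R[X]) :
    f.reverse.eval 1 = f.eval 1 := by
  let : Invertible (1 : R) := invertibleOne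
  simpa using eval₂_reverse_mul_pow (RingHom.id R) 1 f

theorem aeval_inv_reverse_eq_zero_iff {R A : Type*} [CommSemiring R] [Field A]
    [Algebra R A] {x : A} (hx : x ≠ 0) (f : R[X]) :
    aeval x⁻¹ f.reverse = 0 ↔ aeval x f = 0 := by
  let : Invertible x := invertibleOfNonzero hx
  simpa [aeval_def, invOf_eq_inv] using eval₂_reverse_eq_zero_iff (algebraMap R A) x f

theorem reverse_eq_self_of_dvd_reverse {K : Type*} [Field K] (h2 : (2 : K) ≠ 0)
    {f : K[X]} (hf : f.Monic) (hirr : Irreducible f) (hdeg : 1 < f.natDegree)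
    (hdvd : f ∣ f.reverse) : f.reverse = f := by
  obtain ⟨c, hrev⟩ : ∃ c, f.reverse = C c * f :=
    ⟨_, eq_leadingCoeff_mul_of_monic_of_dvd_of_natDegree_le hf hdvd (reverse_natDegree_le f)⟩
  have hc : c * f.coeff 0 = 1 := by
    simpa [hf.leadingCoeff] using (congrArg (coeff · 0) hrev).symm
  have hcc : c * c = 1 := by
    have htrail : f.natTrailingDegree = 0 :=
      natTrailingDegree_eq_zero.mpr (Or.inr (right_ne_zero_of_mul_eq_one hc))
    have hlead := congrArg leadingCoeff hrev
    rw [reverse_leadingCoeff, trailingCoeff, htrail, leadingCoeff_mul, leadingCoeff_C,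
      hf.leadingCoeff, mul_one] at hlead
    rwa [hlead] at hc
  rcases mul_self_eq_one_iff.mp hcc with h | h
  · rw [hrev, h, C_1, one_mul]
  · exfalso
    have hroot : f.IsRoot 1 := by
      have := eval_one_reverse f
      rw [hrev, h, eval_mul, eval_C] at this
      exact (mul_eq_zero.mp (by linear_combination -this : 2 * f.eval 1 = 0)).resolve_left h2
    have := natDegree_le_of_dvd ((irreducible_X_sub_C 1).dvd_symm hirr (dvd_iff_isRoot.mpr hroot))
      (X_sub_C_ne_zero 1)
    rw [natDegree_X_sub_C] at this
    omega

end Polynomial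

theorem card_nthRootsFinset_one {K : Type*} [Field K] [IsAlgClosed K] {k : ℕ} (hk : (k : K) ≠ 0) :
    (nthRootsFinset k (1 : K)).card = k := by
  have : NeZero (k : K) := ⟨hk⟩
  obtain ⟨ζ, hζ⟩ := IsAlgClosed.exists_root (cyclotomic k K)
    (degree_cyclotomic_pos k K (Nat.pos_of_ne_zero (by rintro rfl; simp at hk))).ne'
  exact (isRoot_cyclotomic_iff.mp hζ).card_nthRootsFinset

theorem card_nthRootsFinset_one_sdiff_two {K : Type*} [Field K] [IsAlgClosed K] [DecidableEq K]
    {N : ℕ} (hN : (N : K) ≠ 0) (h2 : (2 : K) ≠ 0) (hdvd : 2 ∣ N) :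
    (nthRootsFinset N (1 : K) \ nthRootsFinset 2 1).card = N - 2 := by
  have hsub : nthRootsFinset 2 (1 : K) ⊆ nthRootsFinset N 1 := by
    obtain ⟨k, rfl⟩ := hdvd
    intro x hx
    rw [mem_nthRootsFinset two_pos] at hx
    rw [mem_nthRootsFinset (Nat.pos_of_ne_zero (by rintro h; simp [h] at hN)), pow_mul, hx,
      one_pow]
  rw [Finset.card_sdiff_of_subset hsub, card_nthRootsFinset_one hN,
    card_nthRootsFinset_one (by exact_mod_cast h2)]

theorem card_eq_sum_natDegree_image_minpoly {F Ω : Type*} [Field F] [PerfectField F] [Field Ω]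
    [IsAlgClosed Ω] [Algebra F Ω] [DecidableEq F[X]] (S : Finset Ω) (hS : ∀ β ∈ S, IsIntegral F β)
    (hconj : ∀ β ∈ S, ∀ γ, aeval γ (minpoly F β) = 0 → γ ∈ S) :
    S.card = ∑ f ∈ S.image (minpoly F), f.natDegree := by
  rw [Finset.card_eq_sum_card_image (minpoly F) S]
  refine Finset.sum_congr rfl fun f hf ↦ ?_
  obtain ⟨β, hβS, rfl⟩ := Finset.mem_image.mp hf
  have hβ := hS β hβS
  classical
  have hfiber : {γ ∈ S | minpoly F γ = minpoly F β} = ((minpoly F β).aroots Ω).toFinset := by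
    ext γ
    simp only [Finset.mem_filter, Multiset.mem_toFinset, mem_aroots, minpoly.ne_zero hβ, ne_eq,
      not_false_eq_true, true_and]
    refine ⟨fun ⟨_, h⟩ ↦ h ▸ minpoly.aeval F γ, fun h ↦ ⟨hconj β hβS γ h, ?_⟩⟩
    exact (minpoly.eq_of_irreducible_of_monic (minpoly.irreducible hβ) h (minpoly.monic hβ)).symm
  have hsep := PerfectField.separable_of_irreducible (minpoly.irreducible hβ)
  rw [hfiber, Multiset.toFinset_card_of_nodup (nodup_roots hsep.map),
    ← natDegree_map (algebraMap F Ω), (IsAlgClosed.splits _).natDegree_eq_card_roots]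

namespace FiniteField

variable {F Ω : Type*} [Field F] [Fintype F] [Field Ω] [Algebra F Ω]

theorem two_ne_zero_of_odd_card (hq : Odd (Fintype.card F)) : (2 : F) ≠ 0 :=
  Ring.two_ne_zero fun h ↦ by simpa [Nat.odd_iff.mp hq] using even_card_iff_char_two.mp h

theorem frobeniusAlgHom_pow_apply (k : ℕ) (x : Ω) :
    (frobeniusAlgHom F Ω ^ k) x = x ^ Fintype.card F ^ k := by
  rw [AlgHom.coe_pow, coe_frobeniusAlgHom, pow_iterate]

theorem aeval_pow_card_pow (x : Ω) (g : F[X]) (k : ℕ) :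
    aeval (x ^ Fintype.card F ^ k) g = aeval x g ^ Fintype.card F ^ k := by
  rw [← frobeniusAlgHom_pow_apply, ← frobeniusAlgHom_pow_apply, aeval_algHom_apply]

theorem pow_card_pow_injective (k : ℕ) :
    Function.Injective fun x : Ω ↦ x ^ Fintype.card F ^ k := by
  intro x y h
  apply (frobeniusAlgHom F Ω ^ k).toRingHom.injective
  simpa [frobeniusAlgHom_pow_apply] using h

theorem pow_card_pow_eq_self_iff {α : Ω} (hα : IsIntegral F α) (e : ℕ) :
    α ^ Fintype.card F ^ e = α ↔ (minpoly F α).natDegree ∣ e := by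
  have : FiniteDimensional F F⟮α⟯ := adjoin.finiteDimensional hα
  have : Finite F⟮α⟯ := Module.finite_of_finite F
  let φ := frobeniusAlgEquivOfAlgebraic F F⟮α⟯ ^ e
  have hφ : φ (AdjoinSimple.gen F α) = AdjoinSimple.gen F α ^ Fintype.card F ^ e := by
    rw [AlgEquiv.coe_pow, coe_frobeniusAlgEquivOfAlgebraic_iterate]
  rw [← adjoin.finrank hα, ← orderOf_frobeniusAlgEquivOfAlgebraic,
    orderOf_dvd_iff_pow_eq_one]
  change _ ↔ φ = 1
  constructor
  · intro h
    refine AlgEquiv.coe_toAlgHom_injective (adjoin_algHom_ext F fun x hx ↦ ?_)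
    obtain rfl := Set.mem_singleton_iff.mp hx
    exact hφ.trans (Subtype.val_injective (by simpa using h))
  · intro h
    simpa [h] using congrArg Subtype.val hφ.symm

theorem exists_eq_pow_card_pow_of_aeval_minpoly_eq_zero {α γ : Ω} (hα : IsIntegral F α)
    (hγ : aeval γ (minpoly F α) = 0) :
    ∃ i < (minpoly F α).natDegree, α ^ Fintype.card F ^ i = γ := by
  classical
  set d := (minpoly F α).natDegree
  set Z := ((minpoly F α).aroots Ω).toFinset
  have hne : minpoly F α ≠ 0 := minpoly.ne_zero hα
  have horbit : (Finset.range d).image (fun i ↦ α ^ Fintype.card F ^ i) ⊆ Z := by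
    simp only [Finset.image_subset_iff, Z, Multiset.mem_toFinset, mem_aroots]
    exact fun i _ ↦ ⟨hne, by rw [aeval_pow_card_pow, minpoly.aeval, zero_pow (by positivity)]⟩
  have hinj : Set.InjOn (fun i ↦ α ^ Fintype.card F ^ i) (Finset.range d) := by
    intro i hi j hj hij
    wlog hle : i ≤ j generalizing i j
    · exact (this hj hi hij.symm (by omega)).symm
    have hfix : α ^ Fintype.card F ^ (j - i) = α := by
      refine pow_card_pow_injective (F := F) i ?_
      simp only at hij ⊢
      rw [← pow_mul, ← pow_add, Nat.sub_add_cancel hle, hij]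
    have hdvd := (pow_card_pow_eq_self_iff hα _).mp hfix
    simp only [Finset.coe_range, Set.mem_Iio] at hi hj
    have := Nat.eq_zero_of_dvd_of_lt hdvd (by omega)
    omega
  have hcard : Z.card ≤ ((Finset.range d).image (fun i ↦ α ^ Fintype.card F ^ i)).card := by
    rw [Finset.card_image_of_injOn hinj, Finset.card_range]
    exact (Multiset.toFinset_card_le _).trans ((card_roots' _).trans natDegree_map_le)
  have hγ' : γ ∈ Z := by simpa [Z, mem_aroots] using ⟨hne, hγ⟩
  rw [← Finset.eq_of_subset_of_card_le horbit hcard] at hγ'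
  simpa using hγ'

end FiniteField

open FiniteField

-- For `q = #F` these are the `β` with `β ^ q ^ n = β⁻¹ ≠ β`.
open Classical in
noncomputable def circleRoots (Ω : Type*) [Field Ω] (q n : ℕ) : Finset Ω :=
  nthRootsFinset (q ^ n + 1) 1 \ nthRootsFinset 2 1

theorem mem_circleRoots {Ω : Type*} [Field Ω] {q n : ℕ} {β : Ω} :
    β ∈ circleRoots Ω q n ↔ β ^ (q ^ n + 1) = 1 ∧ β ^ 2 ≠ 1 := by
  simp [circleRoots, mem_nthRootsFinset]

section CircleRoots

variable {F Ω : Type*} [Field F] [Fintype F] [Field Ω] [Algebra F Ω]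

theorem isIntegral_of_mem_circleRoots {n : ℕ} {β : Ω}
    (hβ : β ∈ circleRoots Ω (Fintype.card F) n) : IsIntegral F β :=
  .of_pow (Nat.succ_pos _) ((mem_circleRoots.mp hβ).1 ▸ isIntegral_one)

theorem natDegree_minpoly_of_mem_circleRoots {m : ℕ} {β : Ω}
    (hβ : β ∈ circleRoots Ω (Fintype.card F) (2 ^ m)) : (minpoly F β).natDegree = 2 * 2 ^ m := by
  obtain ⟨h1, h2⟩ := mem_circleRoots.mp hβ
  have hint := isIntegral_of_mem_circleRoots hβ
  have h0 : β ≠ 0 := by rintro rfl; simp at h1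
  have hinv : β ^ Fintype.card F ^ 2 ^ m = β⁻¹ := eq_inv_of_mul_eq_one_left (by rwa [← pow_succ])
  have hfix : β ^ Fintype.card F ^ 2 ^ (m + 1) = β := by
    rw [pow_succ (2 : ℕ) m, pow_mul, sq, pow_mul, hinv, inv_pow, hinv, inv_inv]
  have hndvd : ¬ (minpoly F β).natDegree ∣ 2 ^ m := fun h ↦ h2 <| by
    rw [(pow_card_pow_eq_self_iff hint _).mpr h] at hinv
    rw [sq]; nth_rewrite 2 [hinv]; exact mul_inv_cancel₀ h0
  obtain ⟨j, hj, hdeg⟩ := (Nat.dvd_prime_pow Nat.prime_two).mp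
    ((pow_card_pow_eq_self_iff hint _).mp hfix)
  obtain rfl : j = m + 1 := by
    by_contra hne
    exact hndvd (hdeg ▸ pow_dvd_pow 2 (by omega))
  rw [hdeg, pow_succ']

theorem reverse_minpoly_of_mem_circleRoots (h2F : (2 : F) ≠ 0) {n : ℕ} {β : Ω}
    (hβ : β ∈ circleRoots Ω (Fintype.card F) n) : (minpoly F β).reverse = minpoly F β := by
  obtain ⟨h1, h2⟩ := mem_circleRoots.mp hβ
  have hint := isIntegral_of_mem_circleRoots hβ
  have h0 : β ≠ 0 := by rintro rfl; simp at h1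
  have hdeg : 1 < (minpoly F β).natDegree := by
    refine lt_of_le_of_ne (minpoly.natDegree_pos hint) fun h ↦ h2 ?_
    rwa [pow_succ, (pow_card_pow_eq_self_iff hint n).mpr (h ▸ one_dvd n), ← sq] at h1
  have hinv : β ^ Fintype.card F ^ n = β⁻¹ := eq_inv_of_mul_eq_one_left (by rwa [← pow_succ])
  have hroot : aeval β⁻¹ (minpoly F β) = 0 := by
    rw [← hinv, aeval_pow_card_pow, minpoly.aeval, zero_pow (by positivity)]
  refine reverse_eq_self_of_dvd_reverse h2F (minpoly.monic hint) (minpoly.irreducible hint) hdeg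
    (minpoly.dvd F β ?_)
  simpa using (aeval_inv_reverse_eq_zero_iff (inv_ne_zero h0) _).mpr hroot

theorem pow_card_pow_add_one_eq_one_of_aeval_inv {β : Ω} (hβ : IsIntegral F β) (h0 : β ≠ 0)
    {n : ℕ} (hdeg : (minpoly F β).natDegree = 2 * n) (hinv : aeval β⁻¹ (minpoly F β) = 0)
    (h2 : β ^ 2 ≠ 1) : β ^ (Fintype.card F ^ n + 1) = 1 := by
  obtain ⟨i, hi, hβi⟩ := exists_eq_pow_card_pow_of_aeval_minpoly_eq_zero hβ hinv
  have hfix : β ^ Fintype.card F ^ (i + i) = β := by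
    rw [pow_add, pow_mul, hβi, inv_pow, hβi, inv_inv]
  obtain ⟨k, hk⟩ := hdeg ▸ (pow_card_pow_eq_self_iff hβ _).mp hfix
  obtain rfl | rfl : i = 0 ∨ i = n := by
    rcases k with _ | _ | k
    · omega
    · omega
    · rw [hdeg] at hi; nlinarith
  · rw [pow_zero, pow_one] at hβi
    exact absurd (by rw [sq]; nth_rewrite 2 [hβi]; exact mul_inv_cancel₀ h0) h2
  · rw [pow_succ, hβi, inv_mul_cancel₀ h0]

theorem mem_circleRoots_of_reverse_eq {f : F[X]} (hf : f.Monic) (hirr : Irreducible f) {n : ℕ}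
    (hdeg : f.natDegree = 2 * n) (hrev : f.reverse = f) {γ : Ω} (hγ : aeval γ f = 0) :
    γ ∈ circleRoots Ω (Fintype.card F) n := by
  have h0 : γ ≠ 0 := by
    rintro rfl
    have : f.coeff 0 = 1 := by rw [← hrev, coeff_zero_reverse, hf.leadingCoeff]
    simp [aeval_def, eval₂_at_zero, this] at hγ
  have hmin : minpoly F γ = f := (minpoly.eq_of_irreducible_of_monic hirr hγ hf).symm
  have hint : IsIntegral F γ := ⟨f, hf, by rwa [← aeval_def]⟩
  have h2 : γ ^ 2 ≠ 1 := by
    intro h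
    obtain ⟨a, rfl⟩ : ∃ a : F, algebraMap F Ω a = γ := by
      rcases sq_eq_one_iff.mp h with rfl | rfl
      exacts [⟨1, map_one _⟩, ⟨-1, by simp⟩]
    rw [← hmin, minpoly.eq_X_sub_C, natDegree_X_sub_C] at hdeg
    omega
  refine mem_circleRoots.mpr
    ⟨pow_card_pow_add_one_eq_one_of_aeval_inv hint h0 (hmin ▸ hdeg) ?_ h2, h2⟩
  rwa [hmin, ← hrev, aeval_inv_reverse_eq_zero_iff h0]

theorem mem_circleRoots_of_aeval_minpoly_eq_zero (h2F : (2 : F) ≠ 0) {m : ℕ} {β γ : Ω}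
    (hβ : β ∈ circleRoots Ω (Fintype.card F) (2 ^ m)) (hγ : aeval γ (minpoly F β) = 0) :
    γ ∈ circleRoots Ω (Fintype.card F) (2 ^ m) :=
  have hint := isIntegral_of_mem_circleRoots hβ
  mem_circleRoots_of_reverse_eq (minpoly.monic hint) (minpoly.irreducible hint)
    (natDegree_minpoly_of_mem_circleRoots hβ) (reverse_minpoly_of_mem_circleRoots h2F hβ) hγ

variable (Ω) [IsAlgClosed Ω]

theorem card_circleRoots (hq : Odd (Fintype.card F)) (n : ℕ) :
    (circleRoots Ω (Fintype.card F) n).card = Fintype.card F ^ n - 1 := by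
  have h2 : (2 : Ω) ≠ 0 := by
    rw [← map_ofNat (algebraMap F Ω) 2]
    exact (_root_.map_ne_zero _).mpr (two_ne_zero_of_odd_card hq)
  have hcard : (Fintype.card F : Ω) = 0 := by
    rw [← map_natCast (algebraMap F Ω), cast_card_eq_zero, map_zero]
  have hN : ((Fintype.card F ^ n + 1 : ℕ) : Ω) ≠ 0 := by
    rcases eq_or_ne n 0 with rfl | hn
    · simpa [one_add_one_eq_two] using h2
    · simp [hcard, hn]
  classical
  rw [circleRoots, card_nthRootsFinset_one_sdiff_two hN h2 hq.pow.add_one.two_dvd]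
  omega

theorem image_minpoly_circleRoots [DecidableEq F[X]] (h2F : (2 : F) ≠ 0) (m : ℕ) :
    ↑((circleRoots Ω (Fintype.card F) (2 ^ m)).image (minpoly F)) =
      {f : F[X] | f.Monic ∧ Irreducible f ∧ f.natDegree = 2 * 2 ^ m ∧ f.reverse = f} := by
  ext f
  simp only [Finset.coe_image, Set.mem_image, Finset.mem_coe, Set.mem_ofPred_eq]
  constructor
  · rintro ⟨β, hβ, rfl⟩
    have hint := isIntegral_of_mem_circleRoots hβ
    exact ⟨minpoly.monic hint, minpoly.irreducible hint, natDegree_minpoly_of_mem_circleRoots hβ,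
      reverse_minpoly_of_mem_circleRoots h2F hβ⟩
  · rintro ⟨hf, hirr, hdeg, hrev⟩
    obtain ⟨γ, hγ⟩ := IsAlgClosed.exists_aeval_eq_zero Ω f (degree_pos_of_irreducible hirr).ne'
    exact ⟨γ, mem_circleRoots_of_reverse_eq hf hirr hdeg hrev hγ,
      (minpoly.eq_of_irreducible_of_monic hirr hγ hf).symm⟩

end CircleRoots

theorem carlitz_pow_two_general (F : Type*) [Field F] [Fintype F] (q n m : ℕ)
    (hF : Fintype.card F = q) (hq : Odd q) (hn : n = 2 ^ m) :
    2 * n * ({f : Polynomial F | f.Monic ∧ Irreducible f ∧ f.natDegree = 2 * n ∧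
        f.reverse = f}.ncard) = q ^ n - 1 := by
  classical
  subst hF hn
  have h2F := two_ne_zero_of_odd_card hq
  set S := circleRoots (AlgebraicClosure F) (Fintype.card F) (2 ^ m)
  rw [← image_minpoly_circleRoots (AlgebraicClosure F) h2F, Set.ncard_coe_finset,
    ← card_circleRoots (AlgebraicClosure F) hq,
    card_eq_sum_natDegree_image_minpoly S (fun _ ↦ isIntegral_of_mem_circleRoots)
      (fun _ hβ _ ↦ mem_circleRoots_of_aeval_minpoly_eq_zero h2F hβ),
    Finset.sum_congr rfl (g := fun _ ↦ 2 * 2 ^ m), Finset.sum_const, smul_eq_mul, mul_comm]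
  rintro _ hf
  obtain ⟨β, hβ, rfl⟩ := Finset.mem_image.mp hf
  exact natDegree_minpoly_of_mem_circleRoots hβ

/-- Carlitz: for odd prime power `q` and `n = 2^m`, `m ≥ 1`, the number of
self-reciprocal monic irreducible polynomials of degree `2n` over `F_q`
equals `(q^n - 1)/(2n)`. -/
theorem carlitz_pow_two (F : Type*) [Field F] [Fintype F] (q n m : ℕ)
    (hF : Fintype.card F = q) (hq : Odd q) (hm : 1 ≤ m) (hn : n = 2 ^ m) :
    2 * n * ({f : Polynomial F | f.Monic ∧ Irreducible f ∧ f.natDegree = 2 * n ∧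
        f.reverse = f}.ncard) = q ^ n - 1 :=
  carlitz_pow_two_general F q n m hF hq hn
end

section
/- Let g(x) = a₁x² + b₁x + c₁ and h(x) = a₂x² + b₂x + c₂ be polynomials over a field K, and let y be an indeterminate. Then the discriminant with respect to y of the discriminant with respect to x of g(x) − y·h(x) equals 16·Res(g, h), where Res denotes the resultant. -/
open Polynomial

/-- The resultant of the two quadratics `a₁x²+b₁x+c₁` and `a₂x²+b₂x+c₂`,
as the determinant of their Sylvester matrix. -/
noncomputable def resQuad {K : Type*} [Field K] (a₁ b₁ c₁ a₂ b₂ c₂ : K) : K :=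
  Matrix.det !![a₁, b₁, c₁, 0; 0, a₁, b₁, c₁; a₂, b₂, c₂, 0; 0, a₂, b₂, c₂]

/-- `Disc_y (Disc_x (g(x) - y h(x))) = 16 Res(g,h)` for quadratics
`g = a₁x²+b₁x+c₁`, `h = a₂x²+b₂x+c₂`.  Here
`Disc_x (g(x) - y h(x)) = (b₂²-4a₂c₂) y² + (4a₁c₂+4c₁a₂-2b₁b₂) y + (b₁²-4a₁c₁)`,
a quadratic in `y` whose discriminant in `y` is taken. -/
theorem disc_disc_eq_sixteen_res {K : Type*} [Field K] (a₁ b₁ c₁ a₂ b₂ c₂ : K) :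
    (4 * a₁ * c₂ + 4 * c₁ * a₂ - 2 * b₁ * b₂) ^ 2
        - 4 * (b₂ ^ 2 - 4 * a₂ * c₂) * (b₁ ^ 2 - 4 * a₁ * c₁)
      = 16 * resQuad a₁ b₁ c₁ a₂ b₂ c₂ := by
  simp [resQuad, Matrix.det_succ_row_zero, Fin.sum_univ_succ, Fin.succAbove]
  ring
end

section
/- Let q = 2^l and let Φ : P¹ → P¹ over the algebraic closure of F_q be given by Φ([X : Y]) = [a₁X² + b₁XY + c₁Y² : a₂X² + b₂XY + c₂Y²], where the two quadratic forms are coprime and b₁ ≠ 0 or b₂ ≠ 0. Then Φ is separable of degree 2 and has exactly one ramification point. -/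
/-!
At a finite point `x`, the ramification index of `u / v` is the multiplicity of `x` as a root
of `v(x) u - u(x) v`, which is at least two exactly when the Wronskian `u' v - u v'` vanishes
at `x`; at `∞` the same holds for the reflected pair at `0`. In characteristic two the
derivatives of the quadratics are the constants `b₁, b₂`, so the Wronskian is `b₁ v - b₂ u`,
which coprimality keeps nonzero, and it equals `A X² + B` with `A = b₁ a₂ - a₁ b₂`,
`B = b₁ c₂ - c₁ b₂`. Hence the ramification points are the zeros on `P¹` of the binary form
`A X² + B Y² = (√A X + √B Y)²`: exactly one point.
-/

open Polynomial

/-- Ramification index of the rational self-map `u/v` of `P¹` (points modelled as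
`Option K`, `none = ∞`) at a point; cf. the substitution `x ↦ 1/x` at infinity. -/
noncomputable def ramIdx {K : Type*} [Field K] (u v : Polynomial K) : Option K → ℕ
  | some x => (C (v.eval x) * u - C (u.eval x) * v).rootMultiplicity x
  | none =>
      let d := max u.natDegree v.natDegree
      let U := X ^ (d - u.natDegree) * u.reverse
      let V := X ^ (d - v.natDegree) * v.reverse
      (C (V.eval 0) * U - C (U.eval 0) * V).rootMultiplicity 0

namespace Polynomial

variable {K : Type*} [Field K]

theorem X_pow_sub_natDegree_mul_reverse {p : K[X]} {N : ℕ} (h : p.natDegree ≤ N) :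
    X ^ (N - p.natDegree) * p.reverse = p.reflect N := by
  have := reflect_mul p 1 le_rfl (natDegree_one.trans_le (Nat.zero_le (N - p.natDegree)))
  rw [mul_one, Nat.add_sub_cancel' h, reflect_one, ← reverse, mul_comm] at this
  exact this.symm

theorem eval_zero_reflect (p : K[X]) (N : ℕ) : (p.reflect N).eval 0 = p.coeff N := by
  rw [← coeff_zero_eq_eval_zero, coeff_reflect, revAt_zero]

theorem natDegree_eq_zero_of_C_mul_eq_C_mul {u v : K[X]} {p q : K} (hcop : IsCoprime u v)
    (hp : p ≠ 0) (h : C p * u = C q * v) : u.natDegree = 0 ∧ v.natDegree = 0 := by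
  have hu : u = C (p⁻¹ * q) * v := by
    rw [C_mul, mul_assoc, ← h, ← mul_assoc, ← C_mul, inv_mul_cancel₀ hp, C_1, one_mul]
  have hv : v.natDegree = 0 :=
    natDegree_eq_zero_of_isUnit (hcop.isUnit_of_dvd' (hu ▸ dvd_mul_left v _) dvd_rfl)
  rw [hu]
  exact ⟨Nat.eq_zero_of_le_zero ((natDegree_C_mul_le _ _).trans hv.le), hv⟩

theorem reflect_two_quadratic (a b c : K) :
    (C a * X ^ 2 + C b * X + C c).reflect 2 = C c * X ^ 2 + C b * X + C a := by
  rw [reflect_add, reflect_add, reflect_C_mul_X_pow, ← pow_one X, reflect_C_mul_X_pow, reflect_C]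
  norm_num [revAt_le]
  ring

variable [CharP K 2]

theorem derivative_quadratic_of_charTwo (a b c : K) :
    derivative (C a * X ^ 2 + C b * X + C c) = C b := by
  simp [CharTwo.add_self_eq_zero]

theorem wronskian_quadratic_of_charTwo (a₁ b₁ c₁ a₂ b₂ c₂ : K) :
    derivative (C a₁ * X ^ 2 + C b₁ * X + C c₁) * (C a₂ * X ^ 2 + C b₂ * X + C c₂)
      - (C a₁ * X ^ 2 + C b₁ * X + C c₁) * derivative (C a₂ * X ^ 2 + C b₂ * X + C c₂)
      = C (b₁ * a₂ - a₁ * b₂) * X ^ 2 + C (b₁ * c₂ - c₁ * b₂) := by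
  simp only [derivative_quadratic_of_charTwo, C_sub, C_mul]
  ring

end Polynomial

section Ramification

variable {K : Type*} [Field K] {u v : K[X]}

theorem IsCoprime.eval_ne_zero_or (hcop : IsCoprime u v) (x : K) :
    u.eval x ≠ 0 ∨ v.eval x ≠ 0 := by
  obtain ⟨p, q, h⟩ := hcop
  by_contra! hx
  simpa [hx.1, hx.2] using congrArg (eval x) h

theorem IsCoprime.C_mul_sub_C_mul_ne_zero (hcop : IsCoprime u v)
    (hdeg : 0 < max u.natDegree v.natDegree) {p q : K} (hpq : p ≠ 0 ∨ q ≠ 0) :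
    C p * u - C q * v ≠ 0 := by
  rw [Ne, sub_eq_zero]
  intro h
  obtain ⟨hu, hv⟩ | ⟨hv, hu⟩ := hpq.imp (natDegree_eq_zero_of_C_mul_eq_C_mul hcop · h)
    (natDegree_eq_zero_of_C_mul_eq_C_mul hcop.symm · h.symm)
  all_goals omega

theorem coeff_ne_zero_or_of_max_natDegree_eq {N : ℕ} (hN : max u.natDegree v.natDegree = N)
    (hN0 : 0 < N) : u.coeff N ≠ 0 ∨ v.coeff N ≠ 0 := by
  rcases max_choice u.natDegree v.natDegree with h | h <;> rw [h] at hN <;> subst hN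
  · exact .inl (leadingCoeff_ne_zero.mpr (ne_zero_of_natDegree_gt hN0))
  · exact .inr (leadingCoeff_ne_zero.mpr (ne_zero_of_natDegree_gt hN0))

theorem two_le_ramIdx_some_iff_of_ne_zero {x : K} (hF : C (v.eval x) * u - C (u.eval x) * v ≠ 0) :
    2 ≤ ramIdx u v (some x) ↔ (derivative u * v - u * derivative v).eval x = 0 := by
  change 1 < rootMultiplicity x _ ↔ _
  rw [one_lt_rootMultiplicity_iff_isRoot hF]
  simp [mul_comm]

theorem two_le_ramIdx_some_iff (hcop : IsCoprime u v) (hdeg : 0 < max u.natDegree v.natDegree)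
    (x : K) : 2 ≤ ramIdx u v (some x) ↔ (derivative u * v - u * derivative v).eval x = 0 :=
  two_le_ramIdx_some_iff_of_ne_zero <|
    hcop.C_mul_sub_C_mul_ne_zero hdeg (hcop.eval_ne_zero_or x).symm

theorem ramIdx_none_eq {N : ℕ} (hN : max u.natDegree v.natDegree = N) :
    ramIdx u v none = ramIdx (u.reflect N) (v.reflect N) (some 0) := by
  subst hN
  simp only [ramIdx, X_pow_sub_natDegree_mul_reverse (le_max_left _ _),
    X_pow_sub_natDegree_mul_reverse (le_max_right _ _)]

theorem two_le_ramIdx_none_iff (hcop : IsCoprime u v) {N : ℕ}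
    (hN : max u.natDegree v.natDegree = N) (hN0 : 0 < N) :
    2 ≤ ramIdx u v none ↔ (derivative (u.reflect N) * v.reflect N
      - u.reflect N * derivative (v.reflect N)).eval 0 = 0 := by
  rw [ramIdx_none_eq hN]
  refine two_le_ramIdx_some_iff_of_ne_zero ?_
  rw [eval_zero_reflect, eval_zero_reflect, ← reflect_C_mul, ← reflect_C_mul, ← reflect_sub,
    Ne, reflect_eq_zero_iff]
  exact hcop.C_mul_sub_C_mul_ne_zero (hN ▸ hN0) (coeff_ne_zero_or_of_max_natDegree_eq hN hN0).symm

end Ramification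

-- The zeros on `P¹` of the binary form `A X^p + B Y^p = (A^(1/p) X + B^(1/p) Y)^p`.
theorem existsUnique_option_elim_mul_pow_add_eq_zero {K : Type*} [Field K] {p : ℕ}
    [ExpChar K p] [PerfectRing K p] {A B : K} (hAB : A ≠ 0 ∨ B ≠ 0) :
    ∃! P : Option K, P.elim (A = 0) (fun x ↦ A * x ^ p + B = 0) := by
  by_cases hA : A = 0
  · have hB : B ≠ 0 := hAB.resolve_left (not_not.mpr hA)
    refine ⟨none, hA, ?_⟩
    rintro (_ | x) hx
    · rfl
    · simp [hA, hB] at hx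
  · obtain ⟨r, hr⟩ := surjective_frobenius K p (-B / A)
    have hroot (x : K) : A * x ^ p + B = 0 ↔ x = r := by
      rw [← (frobenius_inj K p).eq_iff (a := x) (b := r), hr, frobenius_def, eq_div_iff hA]
      constructor <;> intro h <;> linear_combination h
    refine ⟨some r, (hroot r).mpr rfl, ?_⟩
    rintro (_ | x) hx
    · exact absurd hx hA
    · exact congrArg some ((hroot x).mp hx)

section QuadraticMap

variable {K : Type*} [Field K] {a₁ b₁ c₁ a₂ b₂ c₂ : K}

theorem max_natDegree_quadratic (ha : a₁ ≠ 0 ∨ a₂ ≠ 0) :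
    max (C a₁ * X ^ 2 + C b₁ * X + C c₁).natDegree (C a₂ * X ^ 2 + C b₂ * X + C c₂).natDegree
      = 2 := by
  have h₁ := natDegree_quadratic_le (a := a₁) (b := b₁) (c := c₁)
  have h₂ := natDegree_quadratic_le (a := a₂) (b := b₂) (c := c₂)
  rcases ha with ha | ha
  · rw [natDegree_quadratic ha] at h₁ ⊢; omega
  · rw [natDegree_quadratic ha] at h₂ ⊢; omega

variable [CharP K 2]

theorem wronskian_quadratic_ne_zero_of_charTwo
    (hcop : IsCoprime (C a₁ * X ^ 2 + C b₁ * X + C c₁) (C a₂ * X ^ 2 + C b₂ * X + C c₂))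
    (ha : a₁ ≠ 0 ∨ a₂ ≠ 0) (hb : b₁ ≠ 0 ∨ b₂ ≠ 0) :
    derivative (C a₁ * X ^ 2 + C b₁ * X + C c₁) * (C a₂ * X ^ 2 + C b₂ * X + C c₂)
      - (C a₁ * X ^ 2 + C b₁ * X + C c₁) * derivative (C a₂ * X ^ 2 + C b₂ * X + C c₂) ≠ 0 := by
  rw [derivative_quadratic_of_charTwo, derivative_quadratic_of_charTwo, mul_comm _ (C b₂)]
  refine hcop.symm.C_mul_sub_C_mul_ne_zero ?_ hb
  rw [max_comm, max_natDegree_quadratic ha]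
  norm_num

theorem two_le_ramIdx_quadratic_some_iff
    (hcop : IsCoprime (C a₁ * X ^ 2 + C b₁ * X + C c₁) (C a₂ * X ^ 2 + C b₂ * X + C c₂))
    (ha : a₁ ≠ 0 ∨ a₂ ≠ 0) (x : K) :
    2 ≤ ramIdx (C a₁ * X ^ 2 + C b₁ * X + C c₁) (C a₂ * X ^ 2 + C b₂ * X + C c₂) (some x) ↔
      (b₁ * a₂ - a₁ * b₂) * x ^ 2 + (b₁ * c₂ - c₁ * b₂) = 0 := by
  rw [two_le_ramIdx_some_iff hcop (by rw [max_natDegree_quadratic ha]; norm_num),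
    wronskian_quadratic_of_charTwo]
  simp

theorem two_le_ramIdx_quadratic_none_iff
    (hcop : IsCoprime (C a₁ * X ^ 2 + C b₁ * X + C c₁) (C a₂ * X ^ 2 + C b₂ * X + C c₂))
    (ha : a₁ ≠ 0 ∨ a₂ ≠ 0) :
    2 ≤ ramIdx (C a₁ * X ^ 2 + C b₁ * X + C c₁) (C a₂ * X ^ 2 + C b₂ * X + C c₂) none ↔
      b₁ * a₂ - a₁ * b₂ = 0 := by
  rw [two_le_ramIdx_none_iff hcop (max_natDegree_quadratic ha) two_pos, reflect_two_quadratic,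
    reflect_two_quadratic, wronskian_quadratic_of_charTwo]
  simp

end QuadraticMap

/-- Coprimality of the two quadratic forms is encoded as coprimality of their dehomogenizations
`u, v` together with `¬ (a₁ = 0 ∧ a₂ = 0)`. -/
theorem quadratic_map_one_ramification_point_char_two {K : Type*} [Field K]
    [IsAlgClosed K] [CharP K 2]
    (a₁ b₁ c₁ a₂ b₂ c₂ : K) (u v : Polynomial K)
    (hu : u = C a₁ * X ^ 2 + C b₁ * X + C c₁) (hv : v = C a₂ * X ^ 2 + C b₂ * X + C c₂)
    (hcop : IsCoprime u v) (ha : ¬ (a₁ = 0 ∧ a₂ = 0)) (hb : b₁ ≠ 0 ∨ b₂ ≠ 0) :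
    derivative u * v - u * derivative v ≠ 0 ∧
      max u.natDegree v.natDegree = 2 ∧
      {P : Option K | 2 ≤ ramIdx u v P}.ncard = 1 := by
  subst hu hv
  replace ha := not_and_or.mp ha
  have hW := wronskian_quadratic_ne_zero_of_charTwo hcop ha hb
  have hAB : b₁ * a₂ - a₁ * b₂ ≠ 0 ∨ b₁ * c₂ - c₁ * b₂ ≠ 0 := by
    by_contra! h
    rw [wronskian_quadratic_of_charTwo, h.1, h.2] at hW
    simp at hW
  refine ⟨hW, max_natDegree_quadratic ha, Set.ncard_eq_one.mpr ?_⟩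
  obtain ⟨P, hP, hunique⟩ := existsUnique_option_elim_mul_pow_add_eq_zero (p := 2) hAB
  refine ⟨P, Set.ext fun Q ↦ Iff.trans ?_ ⟨hunique Q, fun h ↦ h ▸ hP⟩⟩
  cases Q
  exacts [two_le_ramIdx_quadratic_none_iff hcop ha, two_le_ramIdx_quadratic_some_iff hcop ha _]
end

section
/- Let q be a prime power and n ≥ 1. For m | n, let U(m) denote the set of β ∈ F_{q^m} of degree exactly m over F_q such that r_β(x) = g(x) − β·h(x) is an irreducible quadratic over F_{q^m}, where g, h ∈ F_q[x] are fixed coprime polynomials with max(deg g, deg h) = 2. Let Ū(n) be the set of β ∈ F_{q^n} with r_β irreducible and quadratic over F_{q^n}. Then #Ū(n) = ∑_{d | n, d odd} #U(n/d). -/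
/-!
Sort the elements `β` of `Ū(n)` by their degree `m = [F(β) : F]`, a divisor of `n`. Such a `β`
lies in `Km m`, since a finite field has only one subfield of each size. As `r_β` is a quadratic
with coefficients in `Km m`, it is irreducible over `F_{q^n}` iff it is irreducible over `Km m`
and `n / m` is odd. So the degree-`m` part of `Ū(n)` is `U(m)` when `n / m` is odd and empty
otherwise; putting `d = n / m` gives the sum.
-/

open Polynomial

namespace IntermediateField

variable {F E : Type*} [Field F] [Field E] [Algebra F E] [Finite E]

theorem coe_eq_rootSet_X_pow_natCard_sub_X (K : IntermediateField F E) :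
    (K : Set E) = (X ^ Nat.card K - X : F[X]).rootSet E := by
  have : Fintype K := Fintype.ofFinite K
  have hK : 1 < Nat.card K := Finite.one_lt_card
  have hsub : (K : Set E) ⊆ (X ^ Nat.card K - X : F[X]).rootSet E := by
    intro x hx
    have hpow : x ^ Nat.card K = x := by
      rw [Nat.card_eq_fintype_card]
      exact congrArg Subtype.val (FiniteField.pow_card (⟨x, hx⟩ : K))
    rw [mem_rootSet]
    exact ⟨FiniteField.X_pow_card_sub_X_ne_zero F hK, by
      rw [map_sub, map_pow, aeval_X, hpow, sub_self]⟩
  refine Set.eq_of_subset_of_ncard_le hsub ?_ (rootSet_finite _ _)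
  calc _ ≤ (X ^ Nat.card K - X : F[X]).natDegree := ncard_rootSet_le _ _
    _ = Nat.card K := FiniteField.X_pow_card_sub_X_natDegree_eq F hK
    _ = (K : Set E).ncard := Nat.card_coe_set_eq _

theorem eq_of_natCard_eq {K₁ K₂ : IntermediateField F E} (h : Nat.card K₁ = Nat.card K₂) :
    K₁ = K₂ :=
  SetLike.coe_injective <| by
    rw [coe_eq_rootSet_X_pow_natCard_sub_X, coe_eq_rootSet_X_pow_natCard_sub_X, h]

theorem mem_of_finrank_eq_natDegree_minpoly {K : IntermediateField F E} {x : E}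
    (h : Module.finrank F K = (minpoly F x).natDegree) : x ∈ K := by
  have : Finite F := Finite.of_injective _ (algebraMap F E).injective
  have hx : IsIntegral F x := .of_finite F x
  suffices F⟮x⟯ = K from this ▸ mem_adjoin_simple_self F x
  apply eq_of_natCard_eq
  rw [Module.natCard_eq_pow_finrank (K := F) (V := F⟮x⟯),
    Module.natCard_eq_pow_finrank (K := F) (V := K), adjoin.finrank hx, h]

end IntermediateField

namespace Polynomial

theorem irreducible_iff_forall_not_isRoot_of_natDegree_eq_two {K : Type*} [Field K] {p : K[X]}
    (hp : p.natDegree = 2) : Irreducible p ↔ ∀ x, ¬ p.IsRoot x := by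
  have hp0 : p ≠ 0 := by rintro rfl; simp at hp
  rw [irreducible_iff_roots_eq_zero_of_degree_le_three (by omega) (by omega),
    Multiset.eq_zero_iff_forall_notMem]
  simp only [mem_roots hp0]

/-- A root in `L` generates a quadratic subextension; conversely `L` contains a copy of
`K[X]/(p)` as soon as `2 ∣ [L : K]`. -/
theorem irreducible_map_iff_odd_finrank {K L : Type*} [Field K] [Field L] [Algebra K L]
    [Finite L] {p : K[X]} (hp : p.natDegree = 2) :
    Irreducible (p.map (algebraMap K L)) ↔ Irreducible p ∧ Odd (Module.finrank K L) := by
  have hp0 : p ≠ 0 := by rintro rfl; simp at hp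
  rw [irreducible_iff_forall_not_isRoot_of_natDegree_eq_two (by rwa [natDegree_map]),
    irreducible_iff_forall_not_isRoot_of_natDegree_eq_two hp, ← Nat.not_even_iff_odd,
    even_iff_two_dvd]
  constructor
  · intro hL
    have hK : ∀ a, ¬ p.IsRoot a := fun a ha => hL _ ha.map
    refine ⟨hK, fun h2 => ?_⟩
    have := Fact.mk ((irreducible_iff_forall_not_isRoot_of_natDegree_eq_two hp).2 hK)
    have hfr : Module.finrank K (AdjoinRoot p) = 2 := by
      rw [(AdjoinRoot.powerBasis hp0).finrank, AdjoinRoot.powerBasis_dim, hp]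
    obtain ⟨φ⟩ := FiniteField.nonempty_algHom_of_finrank_dvd (F := K) (K := AdjoinRoot p)
      (L := L) (hfr ▸ h2)
    apply hL (φ (AdjoinRoot.root p))
    rw [IsRoot, eval_map_algebraMap, aeval_algHom_apply, AdjoinRoot.aeval_eq, AdjoinRoot.mk_self,
      map_zero]
  · rintro ⟨hK, hodd⟩ x hx
    have hirr := (irreducible_iff_forall_not_isRoot_of_natDegree_eq_two hp).2 hK
    have hdeg : (minpoly K x).natDegree = 2 := by
      rw [← minpoly.eq_of_irreducible hirr (by rwa [← eval_map_algebraMap]),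
        natDegree_mul_C (inv_ne_zero (leadingCoeff_ne_zero.2 hp0)), hp]
    exact hodd (hdeg ▸ minpoly.degree_dvd (.of_finite K x))

end Polynomial

section Pencil

variable {F : Type*} [Field F] (g h : F[X])

/-- The polynomial `r_β` of the statement. -/
noncomputable def pencil {K : Type*} [Field K] [Algebra F K] (β : K) : K[X] :=
  g.map (algebraMap F K) - C β * h.map (algebraMap F K)

theorem pencil_map {K L : Type*} [Field K] [Field L] [Algebra F K] [Algebra F L] [Algebra K L]
    [IsScalarTower F K L] (β : K) :
    (pencil g h β).map (algebraMap K L) = pencil g h (algebraMap K L β) := by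
  simp only [pencil, Polynomial.map_sub, Polynomial.map_mul, map_C, map_map,
    ← IsScalarTower.algebraMap_eq]

variable {E : Type*} [Field E] [Algebra F E]

theorem natDegree_pencil_coe {K : IntermediateField F E} (x : K) :
    (pencil g h (x : E)).natDegree = (pencil g h x).natDegree := by
  rw [← natDegree_map (algebraMap K E), pencil_map]
  rfl

variable [Finite E]

theorem ncard_setOf_natDegree_minpoly_eq (K : IntermediateField F E) {m : ℕ}
    (hK : Module.finrank F K = m) :
    {β : E | (minpoly F β).natDegree = m ∧ (pencil g h β).natDegree = 2 ∧
        Irreducible (pencil g h β)}.ncard =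
      if Odd (Module.finrank K E) then
        {x : K | (minpoly F (x : E)).natDegree = m ∧ (pencil g h x).natDegree = 2 ∧
          Irreducible (pencil g h x)}.ncard
      else 0 := by
  have irreducible_iff (x : K) (hx : (pencil g h x).natDegree = 2) :
      Irreducible (pencil g h (x : E)) ↔
        Irreducible (pencil g h x) ∧ Odd (Module.finrank K E) := by
    rw [← irreducible_map_iff_odd_finrank hx, pencil_map]
    rfl
  split_ifs with hodd
  · rw [← Set.ncard_image_of_injective _ Subtype.val_injective]
    congr 1
    ext β
    constructor
    · rintro ⟨hm, h2, hirr⟩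
      have hβ : β ∈ K := IntermediateField.mem_of_finrank_eq_natDegree_minpoly (hK.trans hm.symm)
      have h2' : (pencil g h (⟨β, hβ⟩ : K)).natDegree = 2 := natDegree_pencil_coe g h ⟨β, hβ⟩ ▸ h2
      exact ⟨⟨β, hβ⟩, ⟨hm, h2', ((irreducible_iff _ h2').1 hirr).1⟩, rfl⟩
    · rintro ⟨x, ⟨hm, h2, hirr⟩, rfl⟩
      exact ⟨hm, natDegree_pencil_coe g h x ▸ h2, (irreducible_iff x h2).2 ⟨hirr, hodd⟩⟩
  · refine (Set.ncard_eq_zero).2 (Set.eq_empty_of_forall_notMem ?_)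
    rintro β ⟨hm, h2, hirr⟩
    have hβ : β ∈ K := IntermediateField.mem_of_finrank_eq_natDegree_minpoly (hK.trans hm.symm)
    exact hodd ((irreducible_iff ⟨β, hβ⟩ (natDegree_pencil_coe g h ⟨β, hβ⟩ ▸ h2)).1 hirr).2

end Pencil

theorem Set.ncard_eq_sum_ncard_fiberwise {α ι : Type*} [Finite α] {s : Set α} {t : Finset ι}
    {f : α → ι} (H : ∀ x ∈ s, f x ∈ t) : s.ncard = ∑ i ∈ t, {x ∈ s | f x = i}.ncard := by
  classical
  have := Fintype.ofFinite α
  simp only [Set.ncard_eq_toFinset_card']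
  rw [Finset.card_eq_sum_card_fiberwise (f := f) (by simpa [Set.MapsTo] using H)]
  refine Finset.sum_congr rfl fun i _ => ?_
  congr 1
  ext x
  simp

theorem Nat.sum_filter_odd_div_divisors {M : Type*} [AddCommMonoid M] (n : ℕ) (f : ℕ → M) :
    ∑ d ∈ n.divisors.filter Odd, f (n / d) = ∑ m ∈ n.divisors, if Odd (n / m) then f m else 0 := by
  rw [Finset.sum_filter, ← Nat.sum_div_divisors]
  refine Finset.sum_congr rfl fun d hd => ?_
  rw [Nat.div_div_self (Nat.dvd_of_mem_divisors hd) (Nat.ne_zero_of_mem_divisors hd)]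

theorem card_Ubar_eq_sum_card_U_general (F E : Type*) [Field F] [Fintype F] [Field E] [Fintype E]
    [Algebra F E] (q n : ℕ) (hF : Fintype.card F = q)
    (hE : Fintype.card E = q ^ n)
    (g h : Polynomial F)
    (Km : ℕ → IntermediateField F E) (hKm : ∀ m ∈ n.divisors, Module.finrank F (Km m) = m) :
    {β : E | ((g.map (algebraMap F E) - C β * h.map (algebraMap F E)).natDegree = 2) ∧
        Irreducible (g.map (algebraMap F E) - C β * h.map (algebraMap F E))}.ncard
      = ∑ d ∈ n.divisors.filter (fun d => Odd d),
          {β : Km (n / d) | (minpoly F (β : E)).natDegree = n / d ∧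
            ((g.map (algebraMap F (Km (n / d)))
                - C β * h.map (algebraMap F (Km (n / d)))).natDegree = 2) ∧
            Irreducible (g.map (algebraMap F (Km (n / d)))
                - C β * h.map (algebraMap F (Km (n / d))))}.ncard := by
  have hfrE : Module.finrank F E = n :=
    Nat.pow_right_injective (hF ▸ Fintype.one_lt_card) <| show q ^ _ = q ^ n by
      rw [← hE, Module.card_eq_pow_finrank (K := F), hF]
  have hn : n ≠ 0 := hfrE ▸ Module.finrank_pos.ne'
  have hfrKm (m : ℕ) (hm : m ∈ n.divisors) : Module.finrank (Km m) E = n / m := by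
    rw [← hfrE, ← Module.finrank_mul_finrank F (Km m) E, hKm m hm,
      Nat.mul_div_cancel_left _ (Nat.pos_of_mem_divisors hm)]
  rw [Set.ncard_eq_sum_ncard_fiberwise (t := n.divisors) (f := fun β => (minpoly F β).natDegree)
    fun β _ => Nat.mem_divisors.2 ⟨hfrE ▸ minpoly.degree_dvd (.of_finite F β), hn⟩]
  refine Eq.trans ?_ (Nat.sum_filter_odd_div_divisors n fun m => {x : Km m |
    (minpoly F (x : E)).natDegree = m ∧ (pencil g h x).natDegree = 2 ∧
      Irreducible (pencil g h x)}.ncard).symm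
  refine Finset.sum_congr rfl fun m hm => ?_
  rw [← hfrKm m hm, ← ncard_setOf_natDegree_minpoly_eq g h (Km m) (hKm m hm)]
  congr 1
  ext β
  simp only [Set.mem_ofPred_eq, pencil]
  tauto

/-- Counting relation `#Ū(n) = ∑_{d ∣ n, d odd} #U(n/d)`, where for `m ∣ n`,
`U(m)` is the set of `β ∈ F_{q^m}` of degree exactly `m` over `F_q` such that
`r_β = g - β h` is an irreducible quadratic over `F_{q^m}`, and `Ū(n)` is the set of
`β ∈ F_{q^n}` with `r_β` an irreducible quadratic over `F_{q^n}`.  Here `F_{q^m}` is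
realised as the intermediate field `Km m` of `F_{q^n}/F_q` of degree `m`. -/
theorem card_Ubar_eq_sum_card_U (F E : Type*) [Field F] [Fintype F] [Field E] [Fintype E]
    [Algebra F E] (q n : ℕ) (hn : 1 ≤ n) (hF : Fintype.card F = q)
    (hE : Fintype.card E = q ^ n)
    (g h : Polynomial F) (hcop : IsCoprime g h) (hdeg : max g.natDegree h.natDegree = 2)
    (Km : ℕ → IntermediateField F E) (hKm : ∀ m ∈ n.divisors, Module.finrank F (Km m) = m) :
    {β : E | ((g.map (algebraMap F E) - C β * h.map (algebraMap F E)).natDegree = 2) ∧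
        Irreducible (g.map (algebraMap F E) - C β * h.map (algebraMap F E))}.ncard
      = ∑ d ∈ n.divisors.filter (fun d => Odd d),
          {β : Km (n / d) | (minpoly F (β : E)).natDegree = n / d ∧
            ((g.map (algebraMap F (Km (n / d)))
                - C β * h.map (algebraMap F (Km (n / d)))).natDegree = 2) ∧
            Irreducible (g.map (algebraMap F (Km (n / d)))
                - C β * h.map (algebraMap F (Km (n / d))))}.ncard :=
  card_Ubar_eq_sum_card_U_general F E q n hF hE g h Km hKm
end
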